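/- arXiv:2506.16598 — 5 statements merged into one kernel-verified Lean document; each statement's English description precedes it below -/
import Mathlib

section
/- Let n ≥ 1 and k ≥ 1. If T is an n-periodic (k+1)-crossing-free set of edges on ℤ, then T contains no edge of length greater than kn. In particular, every n-periodic k-triangulation on ℤ (equivalently, every k-triangulation on the half-cylinder with n marked points) contains no edge of length greater than kn. -/
/- Edges on the universal cover of the half-cylinder, modeled by the integers.
   An edge is an unordered pair of distinct integers, represented as an ordered
   pair `(a, b)` with `a < b` (validity). -/

namespace Multitriangulation

abbrev Edge := ℤ × ℤ

/-- Translate an edge by `t`: `[a,b] + t = [a+t, b+t]`. -/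
def shift (e : Edge) (t : ℤ) : Edge := (e.1 + t, e.2 + t)

/-- Two edges (as unordered pairs of integers) cross:
their endpoints strictly interleave. -/
def Crosses (e f : Edge) : Prop :=
  (min e.1 e.2 < min f.1 f.2 ∧ min f.1 f.2 < max e.1 e.2 ∧ max e.1 e.2 < max f.1 f.2) ∨
  (min f.1 f.2 < min e.1 e.2 ∧ min e.1 e.2 < max f.1 f.2 ∧ max f.1 f.2 < max e.1 e.2)

/-- A finite set of edges is an `l`-crossing if it consists of `l` pairwise
crossing edges. -/
def IsCrossing (l : ℕ) (S : Finset Edge) : Prop :=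
  S.card = l ∧ ∀ e ∈ S, ∀ f ∈ S, e ≠ f → Crosses e f

/-- A set of edges is `l`-crossing-free if no `l` of its edges pairwise cross. -/
def CrossingFree (l : ℕ) (E : Set Edge) : Prop :=
  ¬ ∃ S : Finset Edge, ↑S ⊆ E ∧ IsCrossing l S

/-- A set of edges is `n`-periodic if `e ∈ E ↔ e + n ∈ E`. -/
def Periodic (n : ℕ) (E : Set Edge) : Prop := ∀ e, e ∈ E ↔ shift e (n : ℤ) ∈ E

/-- All members are genuine edges `[a,b]` with `a < b`. -/
def ValidEdges (E : Set Edge) : Prop := ∀ e ∈ E, e.1 < e.2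

/-- An `n`-periodic `k`-triangulation on `ℤ`: an `n`-periodic
`(k+1)`-crossing-free set of edges that is maximal under inclusion among
`n`-periodic `(k+1)`-crossing-free sets of edges. -/
def IsTriangulation (n k : ℕ) (T : Set Edge) : Prop :=
  ValidEdges T ∧ Periodic n T ∧ CrossingFree (k+1) T ∧
  ∀ T', ValidEdges T' → Periodic n T' → CrossingFree (k+1) T' → T ⊆ T' → T' = T


lemma shift_mem {n : ℕ} {T : Set Edge} (hP : Periodic n T) {e : Edge} (he : e ∈ T) :
    ∀ i : ℕ, shift e ((i : ℤ) * n) ∈ T := by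
  intro i
  induction i with
  | zero => simpa [shift] using he
  | succ i ih =>
      have : shift e (((i+1 : ℕ) : ℤ) * n) = shift (shift e ((i : ℤ) * n)) (n : ℤ) := by
        simp only [shift, Prod.mk.injEq]; push_cast; constructor <;> ring
      rw [this]
      exact (hP _).mp ih

lemma crosses_shift {e : Edge} (h : e.1 < e.2) {s t : ℤ} (hst : s < t)
    (hlen : t - s < e.2 - e.1) : Crosses (shift e s) (shift e t) := by
  left
  simp only [shift]
  omega

/-- An `n`-periodic `(k+1)`-crossing-free set of edges on `ℤ`
contains no edge of length greater than `kn`; in particular, neither does any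
`n`-periodic `k`-triangulation on `ℤ`. -/
theorem no_edge_longer_than_kn (n k : ℕ) (hn : 1 ≤ n) (hk : 1 ≤ k) :
    (∀ T : Set Edge, ValidEdges T → Periodic n T → CrossingFree (k+1) T →
      ∀ e ∈ T, e.2 - e.1 ≤ (k : ℤ) * n) ∧
    (∀ T : Set Edge, IsTriangulation n k T →
      ∀ e ∈ T, e.2 - e.1 ≤ (k : ℤ) * n) := by
  have main : ∀ T : Set Edge, ValidEdges T → Periodic n T → CrossingFree (k+1) T →
      ∀ e ∈ T, e.2 - e.1 ≤ (k : ℤ) * n := by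
    intro T hV hP hC e heT
    by_contra h
    push_neg at h
    have hlt : e.1 < e.2 := hV e heT
    have hn0 : (0:ℤ) < n := by exact_mod_cast hn
    apply hC
    refine ⟨(Finset.range (k+1)).image (fun i : ℕ => shift e ((i:ℤ)*n)), ?_, ?_, ?_⟩
    · intro f hf
      simp only [Finset.coe_image, Set.mem_image, Finset.mem_coe, Finset.mem_range] at hf
      obtain ⟨i, _, rfl⟩ := hf
      exact shift_mem hP heT i
    · rw [Finset.card_image_of_injOn, Finset.card_range]
      intro i _ j _ hij
      simp only [shift, Prod.mk.injEq] at hij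
      have : (i:ℤ) * n = (j:ℤ) * n := by omega
      have := mul_right_cancel₀ (ne_of_gt hn0) this
      exact_mod_cast this
    · intro f hf g hg hfg
      simp only [Finset.mem_image, Finset.mem_range] at hf hg
      obtain ⟨i, hi, rfl⟩ := hf
      obtain ⟨j, hj, rfl⟩ := hg
      have hij : i ≠ j := by rintro rfl; exact hfg rfl
      have key : ∀ a b : ℕ, a < b → b < k + 1 →
          Crosses (shift e ((a:ℤ)*n)) (shift e ((b:ℤ)*n)) := by
        intro a b hab hb
        apply crosses_shift hlt
        · have : (a:ℤ) < b := by exact_mod_cast hab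
          exact mul_lt_mul_of_pos_right this hn0
        · have h1 : (b:ℤ) - a ≤ k := by
            have hba : b ≤ a + k := by omega
            have : (b:ℤ) ≤ (a:ℤ) + k := by exact_mod_cast hba
            linarith
          have h2 : ((b:ℤ) - a) * n ≤ (k:ℤ) * n :=
            mul_le_mul_of_nonneg_right h1 (le_of_lt hn0)
          nlinarith
      rcases lt_or_gt_of_ne hij with hlt' | hlt'
      · exact key i j hlt' hj
      · rcases key j i hlt' hi with h' | h'
        · exact Or.inr h'
        · exact Or.inl h'
  exact ⟨main, fun T hT => main T hT.1 hT.2.1 hT.2.2.1⟩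


end Multitriangulation
end

section
/- Let n ≥ 1 and k ≥ 1. Every n-periodic k-triangulation on ℤ contains an edge of length exactly kn; that is, there exists an integer v with [v, v+kn] ∈ T. -/
/- Edges on the universal cover of the half-cylinder, modeled by the integers.
   An edge is an unordered pair of distinct integers, represented as an ordered
   pair `(a, b)` with `a < b` (validity). -/

namespace Multitriangulation

/-!
Every edge of an `n`-periodic `(k+1)`-crossing-free set has length at most `k * n`, since it
would otherwise cross its next `k` translates. If no edge of `T` has length exactly `k * n`, let
`e` be a longest edge of `T`, of length `L < k * n`, and add to `T` the orbit of the edge of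
length `k * n` ending where `e` ends. The orbit alone contains no `(k+1)`-crossing, and a crossing
that uses edges of both kinds can be moved into `T` by trading each long orbit edge for a
translate of `e`. So the enlarged set is still a periodic `(k+1)`-crossing-free set, against the
maximality of `T`.
-/

lemma crosses_iff {e f : Edge} (he : e.1 < e.2) (hf : f.1 < f.2) :
    Crosses e f ↔ (e.1 < f.1 ∧ f.1 < e.2 ∧ e.2 < f.2) ∨ (f.1 < e.1 ∧ e.1 < f.2 ∧ f.2 < e.2) := by
  simp only [Crosses, min_eq_left he.le, max_eq_right he.le, min_eq_left hf.le,
    max_eq_right hf.le]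

lemma Crosses.symm {e f : Edge} (h : Crosses e f) : Crosses f e := Or.symm h

lemma crosses_irrefl (e : Edge) : ¬ Crosses e e := by
  rintro (⟨h, -, -⟩ | ⟨h, -, -⟩) <;> exact lt_irrefl _ h

lemma IsCrossing.image {l : ℕ} {S : Finset Edge} (hS : IsCrossing l S) (φ : Edge → Edge)
    (hφ : ∀ e ∈ S, ∀ f ∈ S, e ≠ f → Crosses (φ e) (φ f)) : IsCrossing l (S.image φ) := by
  refine ⟨?_, ?_⟩
  · rw [Finset.card_image_of_injOn, hS.1]
    intro e he f hf hef
    by_contra hne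
    exact crosses_irrefl _ (hef ▸ hφ e he f hf hne)
  · simp only [Finset.mem_image]
    rintro _ ⟨e, he, rfl⟩ _ ⟨f, hf, rfl⟩ hne
    exact hφ e he f hf fun h => hne (h ▸ rfl)

lemma crosses_shift_iff {e : Edge} (he : e.1 < e.2) {t : ℤ} (ht : 0 ≤ t) :
    Crosses e (shift e t) ↔ 0 < t ∧ t < e.2 - e.1 := by
  rw [crosses_iff he (by simp only [shift]; omega)]
  simp only [shift]
  omega

def translates (n : ℕ) (e : Edge) : Set Edge := Set.range fun j : ℤ => shift e (j * n)

lemma shift_mul_injective {n : ℕ} (hn : 1 ≤ n) (e : Edge) :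
    Function.Injective fun j : ℤ => shift e (j * n) := by
  intro i j hij
  simp only [shift, Prod.ext_iff] at hij
  exact mul_right_cancel₀ (by positivity : (n : ℤ) ≠ 0) (by linarith [hij.1])

lemma length_of_mem_translates {n : ℕ} {e f : Edge} (hf : f ∈ translates n e) :
    f.2 - f.1 = e.2 - e.1 := by
  obtain ⟨j, rfl⟩ := hf
  simp only [shift]
  ring

section Periodic

variable {n : ℕ} {T T' : Set Edge}

lemma Periodic.shift_mul_mem (hT : Periodic n T) {e : Edge} (he : e ∈ T) (j : ℤ) :
    shift e (j * n) ∈ T := by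
  induction j using Int.induction_on with
  | zero => simpa [shift] using he
  | succ i ih =>
    convert (hT _).mp ih using 1
    simp only [shift]
    ext <;> simp only <;> ring
  | pred i ih =>
    refine (hT _).mpr ?_
    convert ih using 1
    simp only [shift]
    ext <;> simp only <;> ring

lemma Periodic.union (hT : Periodic n T) (hT' : Periodic n T') : Periodic n (T ∪ T') :=
  fun e => or_congr (hT e) (hT' e)

lemma periodic_translates (e : Edge) : Periodic n (translates n e) := by
  intro f
  constructor
  · rintro ⟨j, rfl⟩
    exact ⟨j + 1, by simp only [shift]; ext <;> simp only <;> ring⟩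
  · rintro ⟨j, hj⟩
    refine ⟨j - 1, ?_⟩
    simp only [shift, Prod.ext_iff] at hj ⊢
    constructor <;> linarith

lemma ValidEdges.union (hT : ValidEdges T) (hT' : ValidEdges T') : ValidEdges (T ∪ T') := by
  rintro e (he | he)
  exacts [hT e he, hT' e he]

lemma validEdges_translates {e : Edge} (he : e.1 < e.2) : ValidEdges (translates n e) :=
  fun _ hf => by linarith [length_of_mem_translates hf]

lemma Periodic.translates_ending_at_mem (hT : Periodic n T) {e : Edge} (he : e ∈ T) (m : ℤ)
    {f : Edge} (hf : f ∈ translates n (e.2 - m * n, e.2)) :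
    (f.1 - (e.2 - e.1), f.1) ∈ T ∧ (f.2 - (e.2 - e.1), f.2) ∈ T := by
  obtain ⟨j, rfl⟩ := hf
  constructor
  · convert hT.shift_mul_mem he (j - m) using 1
    simp only [shift]
    ring_nf
  · convert hT.shift_mul_mem he j using 1
    simp only [shift]
    ring_nf

lemma CrossingFree.length_le {k : ℕ} (hcf : CrossingFree (k + 1) T) (hn : 1 ≤ n)
    (hval : ValidEdges T) (hper : Periodic n T) {e : Edge} (he : e ∈ T) :
    e.2 - e.1 ≤ k * n := by
  by_contra! hlong
  have hcross : ∀ i j : ℕ, i < j → j ≤ k →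
      Crosses (shift e (i * n)) (shift e (j * n)) := by
    intro i j hij hjk
    have hshift : shift e (j * n) = shift (shift e (i * n)) ((j - i : ℤ) * n) := by
      simp only [shift]; ext <;> simp only <;> ring
    have hlen : ((j - i : ℤ)) * n ≤ k * n := by gcongr; omega
    rw [hshift, crosses_shift_iff (by simp only [shift]; exact add_lt_add_left (hval e he) _)
      (mul_nonneg (by omega) (by positivity))]
    constructor
    · exact mul_pos (by omega) (by exact_mod_cast hn)
    · simp only [shift]; linarith
  refine hcf ⟨(Finset.range (k + 1)).image fun j : ℕ => shift e (j * n), ?_, ?_⟩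
  · simp only [Finset.coe_image, Set.image_subset_iff]
    exact fun j _ => hper.shift_mul_mem he j
  refine ⟨?_, ?_⟩
  · exact (Finset.card_image_of_injective _
      ((shift_mul_injective hn e).comp Nat.cast_injective)).trans (Finset.card_range _)
  · simp only [Finset.mem_image, Finset.mem_range]
    rintro _ ⟨i, hi, rfl⟩ _ ⟨j, hj, rfl⟩ hne
    rcases lt_trichotomy i j with h | rfl | h
    · exact hcross i j h (by omega)
    · exact absurd rfl hne
    · exact (hcross j i h (by omega)).symm

end Periodic

/-- Among `k + 1` translates of an edge of length at most `k * n`, the two extreme ones are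
at least `k * n` apart and so do not cross. -/
lemma crossingFree_translates {n k : ℕ} (hn : 1 ≤ n) (hk : 1 ≤ k) {e : Edge} (he : e.1 < e.2)
    (hlen : e.2 - e.1 ≤ k * n) : CrossingFree (k + 1) (translates n e) := by
  rintro ⟨S, hSsub, hcard, hpair⟩
  set g : ℤ → Edge := fun j => shift e (j * n)
  have hg : g.Injective := shift_mul_injective hn e
  obtain ⟨J, -, rfl⟩ := Finset.subset_set_image_iff.mp (by rwa [Set.image_univ] : ↑S ⊆ g '' .univ)
  have hJcard : J.card = k + 1 := by rw [← hcard, Finset.card_image_of_injective _ hg]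
  have hJne : J.Nonempty := by rw [← Finset.card_pos]; omega
  have hspan : (k : ℤ) ≤ J.max' hJne - J.min' hJne := by
    have := Finset.card_le_card (t := Finset.Icc (J.min' hJne) (J.max' hJne)) fun x hx =>
      Finset.mem_Icc.mpr ⟨J.min'_le x hx, J.le_max' x hx⟩
    rw [hJcard, Int.card_Icc] at this
    omega
  have hmem : ∀ j ∈ J, g j ∈ J.image g := fun j hj => Finset.mem_image_of_mem g hj
  have hc := hpair _ (hmem _ (J.min'_mem hJne)) _ (hmem _ (J.max'_mem hJne))
    (hg.ne (by omega))
  rw [crosses_iff (by simp only [g, shift]; omega) (by simp only [g, shift]; omega)] at hc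
  have hgap : (k : ℤ) * n ≤ (J.max' hJne - J.min' hJne) * n := by gcongr
  simp only [g, shift] at hc
  rcases hc with ⟨-, h, -⟩ | ⟨h, -, -⟩ <;> nlinarith

/-- The endpoint of `f` at which the short edge replacing `f` ends: the endpoint of `f` lying
strictly inside `w` when `f` crosses `w`. -/
def pivot (w f : Edge) : ℤ := if w.1 < f.1 then f.1 else f.2

lemma pivot_mem_Ioo {w f : Edge} (hw : w.1 < w.2) (hf : f.1 < f.2) (hwf : Crosses w f) :
    pivot w f ∈ Set.Ioo w.1 w.2 := by
  rw [crosses_iff hw hf] at hwf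
  unfold pivot
  split_ifs <;> constructor <;> omega

lemma crosses_pivot {u w f : Edge} {L : ℤ} (hu : u.1 < u.2) (hw : w.1 < w.2) (hf : f.1 < f.2)
    (huL : u.2 - u.1 ≤ L) (hwL : w.2 - w.1 ≤ L) (hfL : L < f.2 - f.1)
    (huw : u.1 ≤ w.1) (hwu : w.1 < u.2) (huf : Crosses u f) (hwf : Crosses w f) :
    Crosses u (pivot w f - L, pivot w f) := by
  rw [crosses_iff hu hf] at huf
  rw [crosses_iff hw hf] at hwf
  unfold pivot
  split_ifs <;> rw [crosses_iff hu (by omega)] <;> omega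

lemma crosses_pivot_pivot {w f f' : Edge} {L : ℤ} (hw : w.1 < w.2) (hf : f.1 < f.2)
    (hf' : f'.1 < f'.2) (hwL : w.2 - w.1 ≤ L) (hwf : Crosses w f) (hwf' : Crosses w f')
    (hff' : Crosses f f') :
    Crosses (pivot w f - L, pivot w f) (pivot w f' - L, pivot w f') := by
  have hz := pivot_mem_Ioo hw hf hwf
  have hz' := pivot_mem_Ioo hw hf' hwf'
  have hne : pivot w f ≠ pivot w f' := by
    rw [crosses_iff hf hf'] at hff'
    unfold pivot
    split_ifs <;> omega
  rw [Set.mem_Ioo] at hz hz'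
  rw [crosses_iff (by simp only; omega) (by simp only; omega)]
  simp only
  omega

/-- A crossing in `T ∪ O` that meets `T` is pushed into `T`: with `w` its edge from `T` with the
largest left endpoint, each of its edges `f` from `O` is traded for the length-`L` edge ending at
`pivot w f`. -/
lemma CrossingFree.union {k : ℕ} {T O : Set Edge} {L : ℤ} (hcf : CrossingFree (k + 1) T)
    (hcfO : CrossingFree (k + 1) O) (hval : ValidEdges T) (hTL : ∀ u ∈ T, u.2 - u.1 ≤ L)
    (hOL : ∀ f ∈ O, L < f.2 - f.1)
    (hend : ∀ f ∈ O, (f.1 - L, f.1) ∈ T ∧ (f.2 - L, f.2) ∈ T) :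
    CrossingFree (k + 1) (T ∪ O) := by
  classical
  rintro ⟨S, hST, hS⟩
  by_cases hSO : (S : Set Edge) ⊆ O
  · exact hcfO ⟨S, hSO, hS⟩
  obtain ⟨u₀, hu₀S, hu₀T⟩ : ∃ u ∈ S, u ∈ T := by
    simp only [Set.subset_def, Finset.mem_coe, not_forall] at hSO
    obtain ⟨u, hu, huO⟩ := hSO
    exact ⟨u, hu, (hST hu).resolve_right huO⟩
  obtain ⟨w, hwST, hwmax⟩ := (S.filter (· ∈ T)).exists_max_image Prod.fst
    ⟨u₀, Finset.mem_filter.mpr ⟨hu₀S, hu₀T⟩⟩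
  obtain ⟨hwS, hwT⟩ := Finset.mem_filter.mp hwST
  have hw := hval w hwT
  have hwL := hTL w hwT
  have hO : ∀ f ∈ S, f ∉ T → f ∈ O := fun f hf hfT => (hST hf).resolve_left hfT
  have hOval : ∀ f ∈ O, f.1 < f.2 := fun f hf => by linarith [hOL f hf]
  have hcrossT : ∀ u ∈ S, u ∈ T → ∀ f ∈ S, f ∉ T → Crosses u f :=
    fun u hu huT f hf hfT => hS.2 u hu f hf (by rintro rfl; exact hfT huT)
  have hwu : ∀ u ∈ S, u ∈ T → u.1 ≤ w.1 ∧ w.1 < u.2 := by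
    intro u hu huT
    have huw := hwmax u (Finset.mem_filter.mpr ⟨hu, huT⟩)
    refine ⟨huw, ?_⟩
    rcases eq_or_ne u w with rfl | hne
    · exact hw
    · have := hS.2 u hu w hwS hne
      rw [crosses_iff (hval u huT) hw] at this
      omega
  let φ : Edge → Edge := fun e => if e ∈ T then e else (pivot w e - L, pivot w e)
  refine hcf ⟨S.image φ, ?_, hS.image φ ?_⟩
  · simp only [Finset.coe_image, Set.image_subset_iff]
    intro e he
    by_cases heT : e ∈ T
    · simp [φ, heT]
    · have hendf := hend e (hO e he heT)
      simp only [φ, heT, if_false, Set.mem_preimage, pivot]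
      split_ifs
      exacts [hendf.1, hendf.2]
  · intro e he f hf hef
    by_cases heT : e ∈ T <;> by_cases hfT : f ∈ T <;> simp only [φ, heT, hfT, if_true, if_false]
    · exact hS.2 e he f hf hef
    · exact crosses_pivot (hval e heT) hw (hOval f (hO f hf hfT)) (hTL e heT) hwL
        (hOL f (hO f hf hfT)) (hwu e he heT).1 (hwu e he heT).2 (hcrossT e he heT f hf hfT)
        (hcrossT w hwS hwT f hf hfT)
    · exact (crosses_pivot (hval f hfT) hw (hOval e (hO e he heT)) (hTL f hfT) hwL
        (hOL e (hO e he heT)) (hwu f hf hfT).1 (hwu f hf hfT).2 (hcrossT f hf hfT e he heT)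
        (hcrossT w hwS hwT e he heT)).symm
    · exact crosses_pivot_pivot hw (hOval e (hO e he heT)) (hOval f (hO f hf hfT)) hwL
        (hcrossT w hwS hwT e he heT) (hcrossT w hwS hwT f hf hfT) (hS.2 e he f hf hef)

/-- Every `n`-periodic `k`-triangulation on `ℤ` contains an edge
of length exactly `kn`. -/
theorem exists_edge_of_length_kn (n k : ℕ) (hn : 1 ≤ n) (hk : 1 ≤ k)
    (T : Set Edge) (hT : IsTriangulation n k T) :
    ∃ v : ℤ, (v, v + (k : ℤ) * n) ∈ T := by
  obtain ⟨hval, hper, hcf, hmax⟩ := hT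
  by_contra! hnot
  have hkn : (0 : ℤ) < k * n := by positivity
  have hnot_cf (v : ℤ) : ¬ CrossingFree (k + 1) (T ∪ translates n (v - k * n, v)) := fun hv =>
    have hT' := hmax _ (hval.union (validEdges_translates (by simp only; omega)))
      (hper.union (periodic_translates _)) hv Set.subset_union_left
    hnot (v - k * n) (by simpa using hT' ▸ Or.inr ⟨0, by simp [shift]⟩)
  rcases T.eq_empty_or_nonempty with rfl | ⟨e₀, he₀⟩
  · exact hnot_cf 0 (by simpa using crossingFree_translates hn hk (by simp only; omega) (by simp))
  obtain ⟨L, ⟨e, heT, rfl⟩, hL⟩ := Int.exists_greatest_of_bdd (P := fun l => ∃ e ∈ T, e.2 - e.1 = l)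
    ⟨k * n, by rintro _ ⟨u, hu, rfl⟩; exact hcf.length_le hn hval hper hu⟩ ⟨_, e₀, he₀, rfl⟩
  have hlt : e.2 - e.1 < k * n := (hcf.length_le hn hval hper heT).lt_of_ne fun h =>
    hnot e.1 (by convert heT using 1; ext <;> simp only; omega)
  refine hnot_cf e.2 (hcf.union (crossingFree_translates hn hk (by simp only; omega)
    (by simp only; omega)) hval (fun u hu => hL _ ⟨u, hu, rfl⟩) (fun f hf => ?_)
    fun f hf => hper.translates_ending_at_mem heT k hf)
  rw [length_of_mem_translates hf]
  simp only
  omega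

end Multitriangulation
end

section
/- Let n ≥ 1 and k ≥ 1. If T is an n-periodic (k+1)-crossing-free set of edges on ℤ containing two edges of length kn, say [u, u+kn] ∈ T and [v, v+kn] ∈ T, then u ≡ v (mod n). Consequently, every n-periodic k-triangulation on ℤ contains exactly one edge of length kn up to translation by multiples of n. -/
/- Edges on the universal cover of the half-cylinder, modeled by the integers.
   An edge is an unordered pair of distinct integers, represented as an ordered
   pair `(a, b)` with `a < b` (validity). -/

namespace Multitriangulation

lemma Crosses.ne {e f : Edge} (h : Crosses e f) : e ≠ f := by
  rintro rfl; unfold Crosses at h; omega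

lemma not_crosses_of_length_one {e f : Edge} (he : e.2 = e.1 + 1) : ¬ Crosses e f := by
  unfold Crosses; omega

lemma crosses_of_sub_lt {a b M : ℤ} (hab : a ≠ b) (h₁ : a - b < M) (h₂ : b - a < M) :
    Crosses (a, a + M) (b, b + M) := by
  rw [crosses_iff (by simp; omega) (by simp; omega)]; omega

lemma CrossingFree.card_lt {l : ℕ} {E : Set Edge} (hE : CrossingFree l E) {ι : Type*}
    {s : Finset ι} {g : ι → Edge} (hg : ∀ i ∈ s, g i ∈ E)
    (hcross : ∀ i ∈ s, ∀ j ∈ s, i ≠ j → Crosses (g i) (g j)) : s.card < l := by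
  classical
  by_contra! hl
  obtain ⟨t, hts, rfl⟩ := Finset.exists_subset_card_eq hl
  refine hE ⟨t.image g, by simpa [Set.subset_def] using fun i hi => hg i (hts hi), ?_, ?_⟩
  · exact Finset.card_image_of_injOn fun i hi j hj hij => by
      by_contra hne; exact (hcross i (hts hi) j (hts hj) hne).ne hij
  · simp only [Finset.mem_image]
    rintro _ ⟨i, hi, rfl⟩ _ ⟨j, hj, rfl⟩ hne
    exact hcross i (hts hi) j (hts hj) (by rintro rfl; exact hne rfl)

lemma CrossingFree.card_le_of_forall_mem_Ico {k : ℕ} {T : Set Edge} (hT : CrossingFree (k + 1) T)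
    {A : Finset ℤ} {m N : ℤ} (hA : ∀ a ∈ A, a ∈ Set.Ico m (m + N) ∧ (a, a + N) ∈ T) :
    A.card ≤ k :=
  Nat.lt_succ_iff.mp <| hT.card_lt (g := fun a => (a, a + N)) (fun a ha => (hA a ha).2)
    fun a ha b hb hab => by
      have := (hA a ha).1; have := (hA b hb).1
      exact crosses_of_sub_lt hab (by simp at *; omega) (by simp at *; omega)

lemma Periodic.mk_mem_of_dvd {n : ℕ} {T : Set Edge} (hT : Periodic n T) {a b M : ℤ}
    (h : (a, a + M) ∈ T) (hab : (n : ℤ) ∣ b - a) : (b, b + M) ∈ T := by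
  obtain ⟨c, hc⟩ := hab
  obtain rfl : b = a + n * c := by linarith
  induction c using Int.induction_on with
  | zero => simpa using h
  | succ i ih =>
    convert (hT _).mp (ih (by ring)) using 1
    simp only [shift]; ext <;> simp <;> ring
  | pred i ih =>
    refine (hT _).mpr ?_
    convert ih (by ring) using 1
    simp only [shift]; ext <;> simp <;> ring

def orbit (n : ℕ) (a M : ℤ) : Set Edge := {e | (n : ℤ) ∣ e.1 - a ∧ e.2 = e.1 + M}

lemma periodic_orbit (n : ℕ) (a M : ℤ) : Periodic n (orbit n a M) := by
  intro e
  simp only [orbit, shift, Set.mem_ofPred_eq, add_sub_right_comm e.1, dvd_add_self_right]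
  constructor <;> rintro ⟨h, h'⟩ <;> exact ⟨h, by linarith⟩

lemma Periodic.union_s2 {n : ℕ} {E F : Set Edge} (hE : Periodic n E) (hF : Periodic n F) :
    Periodic n (E ∪ F) := fun e => or_congr (hE e) (hF e)

lemma crossingFree_orbit {n k : ℕ} (hn : 0 < n) (hk : 0 < k) (a : ℤ) :
    CrossingFree (k + 1) (orbit n a (k * n)) := by
  classical
  rintro ⟨S, hSO, hcard, hcross⟩
  have hkn : (0 : ℤ) < k * n := by positivity
  obtain ⟨e₀, he₀, hmin⟩ := S.exists_min_image Prod.fst (by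
    rw [← Finset.card_pos, hcard]; omega)
  obtain ⟨⟨c₀, hc₀⟩, he₀₂⟩ := hSO he₀
  have hsub : S ⊆ (Finset.Ico (0 : ℤ) k).image
      fun c => ((e₀.1 + c * n, e₀.1 + c * n + k * n) : Edge) := by
    intro e he
    obtain ⟨⟨c, hc⟩, he₂⟩ := hSO he
    have hlt : e.1 - e₀.1 < k * n := by
      rcases eq_or_ne e e₀ with rfl | hne
      · simpa using hkn
      · have := hcross e he e₀ he₀ hne
        rw [crosses_iff (by omega) (by omega)] at this
        omega
    have hdiff : e.1 - e₀.1 = (c - c₀) * n := by linarith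
    simp only [Finset.mem_image, Finset.mem_Ico]
    refine ⟨c - c₀, ⟨?_, ?_⟩, by ext <;> simp <;> linarith⟩
    · have := hmin e he; nlinarith
    · nlinarith
  have := (Finset.card_le_card hsub).trans Finset.card_image_le
  simp only [Int.card_Ico, sub_zero, Int.toNat_natCast] at this
  omega

lemma IsTriangulation.mem_of_crossingFree_union {n k : ℕ} {T : Set Edge}
    (hT : IsTriangulation n k T) {a M : ℤ} (hM : 0 < M)
    (hcf : CrossingFree (k + 1) (T ∪ orbit n a M)) : (a, a + M) ∈ T := by
  obtain ⟨hval, hper, -, hmax⟩ := hT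
  have hval' : ValidEdges (T ∪ orbit n a M) := by
    rintro e (he | ⟨-, he⟩)
    exacts [hval e he, by omega]
  rw [← hmax _ hval' (hper.union_s2 (periodic_orbit n a M)) hcf Set.subset_union_left]
  exact Or.inr ⟨by simp, rfl⟩

lemma CrossingFree.union_orbit_one {l n : ℕ} {T : Set Edge} (hT : CrossingFree l T) (hl : 2 ≤ l)
    (a : ℤ) : CrossingFree l (T ∪ orbit n a 1) := by
  rintro ⟨S, hS, hcard, hcross⟩
  refine hT ⟨S, fun e he => ?_, hcard, hcross⟩
  refine (hS he).resolve_right fun ⟨_, he₂⟩ => ?_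
  obtain ⟨f, hf, hfe⟩ := Finset.exists_mem_ne (by omega : 1 < S.card) e
  exact not_crosses_of_length_one he₂ (hcross e he f hf hfe.symm)

lemma card_image_add_mul_range {n : ℕ} (hn : 0 < n) (a : ℤ) (j : ℕ) :
    ((Finset.range j).image fun i : ℕ => a + i * n).card = j := by
  rw [Finset.card_image_of_injective _ fun i i' h => by
    simpa [hn.ne'] using (add_right_injective a h), Finset.card_range]

lemma length_le_of_crossingFree {n k : ℕ} (hn : 0 < n) {T : Set Edge} (hper : Periodic n T)
    (hcf : CrossingFree (k + 1) T) {e : Edge} (he : e ∈ T) : e.2 - e.1 ≤ k * n := by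
  by_contra! hlong
  have hA := hcf.card_le_of_forall_mem_Ico (m := e.1) (N := e.2 - e.1)
    (A := (Finset.range (k + 1)).image fun i : ℕ => e.1 + i * n) <| by
    simp only [Finset.mem_image, Finset.mem_range]
    rintro _ ⟨i, hi, rfl⟩
    have : (i : ℤ) * n ≤ k * n := by gcongr; omega
    refine ⟨⟨by simp; positivity, by omega⟩, hper.mk_mem_of_dvd (a := e.1) ?_ (by simp)⟩
    simpa using he
  rw [card_image_add_mul_range hn] at hA
  omega

lemma dvd_sub_of_length_eq {n k : ℕ} (hn : 0 < n) (hk : 0 < k) {T : Set Edge}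
    (hper : Periodic n T) (hcf : CrossingFree (k + 1) T) {u v : ℤ}
    (hu : (u, u + k * n) ∈ T) (hv : (v, v + k * n) ∈ T) : (n : ℤ) ∣ u - v := by
  by_contra hndvd
  set r := (v - u) % n
  have hr₀ : 0 < r := lt_of_le_of_ne (Int.emod_nonneg _ (by omega)) fun h =>
    hndvd (dvd_sub_comm.mp (Int.dvd_of_emod_eq_zero h.symm))
  have hrn : r < n := Int.emod_lt_of_pos _ (by omega)
  have hr : (u + r, u + r + k * n) ∈ T :=
    hper.mk_mem_of_dvd hv (by simpa using ((Int.mod_modEq (v - u) n).add_left u).symm.dvd)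
  have hnotin : u + r ∉ (Finset.range k).image fun i : ℕ => u + i * n := by
    simp only [Finset.mem_image, Finset.mem_range, not_exists, not_and]
    rintro (_ | i) - h
    · simp at h; omega
    · push_cast at h; nlinarith
  have hA := hcf.card_le_of_forall_mem_Ico (m := u) (N := k * n)
    (A := insert (u + r) ((Finset.range k).image fun i : ℕ => u + i * n)) <| by
    simp only [Finset.mem_insert, Finset.mem_image, Finset.mem_range, Set.mem_Ico]
    rintro _ (rfl | ⟨i, hi, rfl⟩)
    · exact ⟨⟨by omega, by nlinarith⟩, hr⟩
    · have : (i : ℤ) * n < k * n := by gcongr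
      exact ⟨⟨by simp; positivity, by omega⟩, hper.mk_mem_of_dvd hu (by simp)⟩
  rw [Finset.card_insert_of_notMem hnotin, card_image_add_mul_range hn] at hA
  omega

def shorten (c L : ℤ) (e : Edge) : Edge := if c < e.1 then (e.1, e.1 + L) else (e.2, e.2 + L)

section Shorten

variable {L N : ℤ} {e f f₀ : Edge}

lemma shorten_crosses (hLN : L < N) (he : e.2 = e.1 + N) (hf : f.1 < f.2) (hfL : f.2 - f.1 ≤ L)
    (hf₀ : f₀.1 < f₀.2) (hf₀L : f₀.2 - f₀.1 ≤ L) (hmin : f₀.1 ≤ f.1) (hef : Crosses e f)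
    (he₀ : Crosses e f₀) (hff₀ : f = f₀ ∨ Crosses f f₀) : Crosses (shorten f₀.1 L e) f := by
  have hN : 0 < N := by omega
  rw [crosses_iff (by omega) hf] at hef
  rw [crosses_iff (by omega) hf₀] at he₀
  unfold shorten
  split_ifs <;> rw [crosses_iff (by simp; omega) hf] <;> simp only
  · rcases hff₀ with rfl | hff₀
    · omega
    · rw [crosses_iff hf hf₀] at hff₀; omega
  · omega

lemma shorten_mem_Ioo (hLN : L < N) (he : e.2 = e.1 + N) (hf₀ : f₀.1 < f₀.2)
    (hf₀L : f₀.2 - f₀.1 ≤ L) (he₀ : Crosses e f₀) :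
    (shorten f₀.1 L e).1 ∈ Set.Ioo f₀.1 f₀.2 := by
  rw [crosses_iff (by omega) hf₀] at he₀
  unfold shorten
  split_ifs <;> simp only [Set.mem_Ioo] <;> omega

lemma shorten_crosses_shorten {e' : Edge} (hLN : L < N) (he : e.2 = e.1 + N)
    (he' : e'.2 = e'.1 + N) (hf₀ : f₀.1 < f₀.2) (hf₀L : f₀.2 - f₀.1 ≤ L) (hee' : Crosses e e')
    (he₀ : Crosses e f₀) (he'₀ : Crosses e' f₀) :
    Crosses (shorten f₀.1 L e) (shorten f₀.1 L e') := by
  have h := shorten_mem_Ioo hLN he hf₀ hf₀L he₀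
  have h' := shorten_mem_Ioo hLN he' hf₀ hf₀L he'₀
  have hne : e.1 ≠ e'.1 := fun h => hee'.ne (Prod.ext h (by omega))
  rw [crosses_iff (by omega) (by omega)] at hee'
  simp only [Set.mem_Ioo] at h h'
  unfold shorten at *
  split_ifs at * <;> exact crosses_of_sub_lt (by omega) (by omega) (by omega)

end Shorten

lemma Periodic.shorten_mem {n k : ℕ} {T : Set Edge} (hper : Periodic n T) {u L : ℤ}
    (hu : (u, u + L) ∈ T) {e : Edge} (he : e ∈ orbit n u (k * n)) (c : ℤ) :
    shorten c L e ∈ T := by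
  unfold shorten
  split_ifs
  · exact hper.mk_mem_of_dvd hu he.1
  · refine hper.mk_mem_of_dvd hu ?_
    rw [he.2, add_sub_right_comm]
    exact dvd_add he.1 (dvd_mul_left _ _)

lemma crossingFree_union_orbit {n k : ℕ} (hn : 0 < n) {T : Set Edge} (hval : ValidEdges T)
    (hper : Periodic n T) (hcf : CrossingFree (k + 1) T) {u L : ℤ} (hu : (u, u + L) ∈ T)
    (hmax : ∀ e ∈ T, e.2 - e.1 ≤ L) (hL : L < k * n) :
    CrossingFree (k + 1) (T ∪ orbit n u (k * n)) := by
  classical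
  rintro ⟨S, hST, hcard, hcross⟩
  have hlong : ∀ e ∈ S, e ∉ T → e ∈ orbit n u (k * n) := fun e he => (hST he).resolve_left
  by_cases hshort : ∃ f ∈ S, f ∈ T
  swap
  · have hk : 0 < k := Nat.pos_of_ne_zero fun hk => by
      have := hval _ hu; simp [hk] at hL; omega
    simp only [not_exists, not_and] at hshort
    exact crossingFree_orbit hn hk u
      ⟨S, fun e he => hlong e he (hshort e he), hcard, hcross⟩
  obtain ⟨f₀, hf₀, hmin⟩ := (S.filter (· ∈ T)).exists_min_image Prod.fst (by
    simpa [Finset.filter_nonempty_iff] using hshort)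
  rw [Finset.mem_filter] at hf₀
  have hf₀v := hval f₀ hf₀.2
  have hf₀L := hmax f₀ hf₀.2
  have hlong_short : ∀ e ∈ S, e ∉ T → ∀ f ∈ S, f ∈ T → Crosses (shorten f₀.1 L e) f := by
    intro e he heT f hf hfT
    have hne : ∀ g ∈ T, e ≠ g := by rintro g hg rfl; exact heT hg
    refine shorten_crosses hL (hlong e he heT).2 (hval f hfT) (hmax f hfT) hf₀v hf₀L
      (hmin f (Finset.mem_filter.mpr ⟨hf, hfT⟩)) (hcross e he f hf (hne f hfT))
      (hcross e he f₀ hf₀.1 (hne f₀ hf₀.2)) ?_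
    by_cases hff₀ : f = f₀
    exacts [Or.inl hff₀, Or.inr (hcross f hf f₀ hf₀.1 hff₀)]
  have := hcf.card_lt (s := S) (g := fun e => if e ∈ T then e else shorten f₀.1 L e)
    (fun e he => by
      split_ifs with heT
      exacts [heT, hper.shorten_mem hu (hlong e he heT) _])
    (fun e he e' he' hne => by
      by_cases heT : e ∈ T <;> by_cases he'T : e' ∈ T <;> simp only [heT, he'T, if_true, if_false]
      · exact hcross e he e' he' hne
      · exact (hlong_short e' he' he'T e he heT).symm
      · exact hlong_short e he heT e' he' he'T
      · exact shorten_crosses_shorten hL (hlong e he heT).2 (hlong e' he' he'T).2 hf₀v hf₀L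
          (hcross e he e' he' hne) (hcross e he f₀ hf₀.1 fun h => heT (h ▸ hf₀.2))
          (hcross e' he' f₀ hf₀.1 fun h => he'T (h ▸ hf₀.2)))
  omega

lemma IsTriangulation.exists_mem_length_eq {n k : ℕ} (hn : 0 < n) (hk : 0 < k) {T : Set Edge}
    (hT : IsTriangulation n k T) : ∃ u : ℤ, (u, u + k * n) ∈ T := by
  have ⟨hval, hper, hcf, _⟩ := hT
  have hunit : ((0 : ℤ), (0 : ℤ) + 1) ∈ T :=
    hT.mem_of_crossingFree_union one_pos (hcf.union_orbit_one (by omega) 0)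
  obtain ⟨_, ⟨e, heT, rfl⟩, hmax⟩ := Int.exists_greatest_of_bdd
    (P := fun L => ∃ e ∈ T, e.2 - e.1 = L)
    ⟨k * n, by rintro _ ⟨e, he, rfl⟩; exact length_le_of_crossingFree hn hper hcf he⟩
    ⟨1, _, hunit, by simp⟩
  have he : (e.1, e.1 + (e.2 - e.1)) ∈ T := by simpa using heT
  rcases (length_le_of_crossingFree hn hper hcf heT).lt_or_eq with hlt | heq
  · refine ⟨e.1, hT.mem_of_crossingFree_union (by positivity) ?_⟩
    exact crossingFree_union_orbit hn hval hper hcf he (fun f hf => hmax _ ⟨f, hf, rfl⟩) hlt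
  · exact ⟨e.1, heq ▸ he⟩

/-- If an `n`-periodic `(k+1)`-crossing-free set of edges contains
two edges `[u, u+kn]` and `[v, v+kn]` of length `kn`, then `u ≡ v (mod n)`.
Consequently every `n`-periodic `k`-triangulation contains exactly one edge of
length `kn` up to translation by multiples of `n`. -/
theorem edge_of_length_kn_unique (n k : ℕ) (hn : 1 ≤ n) (hk : 1 ≤ k) :
    (∀ T : Set Edge, ValidEdges T → Periodic n T → CrossingFree (k+1) T →
      ∀ u v : ℤ, (u, u + (k : ℤ) * n) ∈ T → (v, v + (k : ℤ) * n) ∈ T →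
        (n : ℤ) ∣ (u - v)) ∧
    (∀ T : Set Edge, IsTriangulation n k T →
      ∃ u : ℤ, (u, u + (k : ℤ) * n) ∈ T ∧
        ∀ v : ℤ, (v, v + (k : ℤ) * n) ∈ T → (n : ℤ) ∣ (v - u)) := by
  refine ⟨fun T _ hper hcf u v hu hv => dvd_sub_of_length_eq hn hk hper hcf hu hv, fun T hT => ?_⟩
  obtain ⟨u, hu⟩ := hT.exists_mem_length_eq hn hk
  exact ⟨u, hu, fun v hv => dvd_sub_of_length_eq hn hk hT.2.1 hT.2.2.1 hv hu⟩

end Multitriangulation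
end

section
/- Let n ≥ 1 and let [a₁,b₁], [a₂,b₂], [a₃,b₃] be three pairwise crossing edges on ℤ with a₁<a₂<a₃<b₁<b₂<b₃, each of length at most 2n. Suppose that for some i ∈ {1,2} there is an integer ℓ with a_{i+1} = a_i + ℓn and b_{i+1} = b_i + ℓn (i.e., [a_{i+1},b_{i+1}] is a translation of [a_i,b_i] by a multiple of n). Then the set of all translates {[a_j + tn, b_j + tn] : j ∈ {1,2,3}, t ∈ ℤ} contains a 3-crossing exactly one of whose three edges is a translate of [a_i, b_i] by a multiple of n. -/
/- Edges on the universal cover of the half-cylinder, modeled by the integers.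
   An edge is an unordered pair of distinct integers, represented as an ordered
   pair `(a, b)` with `a < b` (validity). -/

namespace Multitriangulation

lemma mul_eq_of_pos_lt (t m : ℤ) (hm : 0 < m) (h1 : 0 < t * m) (h2 : t * m < 2 * m) :
    t * m = m := by
  have ht1 : 1 ≤ t := by nlinarith
  have ht2 : t < 2 := by nlinarith
  have : t = 1 := by omega
  simp [this]

lemma mul_le_neg_of_neg (t m : ℤ) (hm : 0 < m) (h1 : t * m < 0) : t * m ≤ -m := by
  have ht1 : t ≤ -1 := by nlinarith
  nlinarith

/-- Given a 3-crossing `E 0, E 1, E 2` with interleaved endpoints,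
each edge of length at most `2n`, such that `E (i+1)` is a translate of `E i`
by a multiple of `n` for some `i ∈ {0,1}` (i.e. `i ∈ {1,2}` in 1-indexed
notation), the set of all translates of the three edges by multiples of `n`
contains a 3-crossing exactly one of whose edges is a translate of `E i`
by a multiple of `n`. -/
theorem three_crossing_with_unique_translate (n : ℕ) (hn : 1 ≤ n)
    (E : Fin 3 → Edge)
    (hord : (E 0).1 < (E 1).1 ∧ (E 1).1 < (E 2).1 ∧ (E 2).1 < (E 0).2 ∧
      (E 0).2 < (E 1).2 ∧ (E 1).2 < (E 2).2)
    (hlen : ∀ j : Fin 3, (E j).2 - (E j).1 ≤ 2 * (n : ℤ))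
    (i : Fin 2)
    (htrans : ∃ t : ℤ, E i.succ = shift (E i.castSucc) (t * n)) :
    ∃ S : Finset Edge,
      (↑S ⊆ {f : Edge | ∃ (j : Fin 3) (t : ℤ), f = shift (E j) (t * n)}) ∧
      IsCrossing 3 S ∧
      ∃! f : Edge, f ∈ S ∧ ∃ t : ℤ, f = shift (E i.castSucc) (t * n) := by
  obtain ⟨t, ht⟩ := htrans
  have hn' : (1:ℤ) ≤ (n:ℤ) := by exact_mod_cast hn
  obtain ⟨h01, h12, h20, h0b, h1b⟩ := hord
  have hl0 := hlen 0
  have hl1 := hlen 1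
  have hl2 := hlen 2
  have hE0 : E 0 = shift (E 0) (0 * n) := by simp [shift]
  have hE2 : E 2 = shift (E 2) (0 * n) := by simp [shift]
  fin_cases i
  · simp only [Fin.mk_zero, show (0:Fin 2).castSucc = (0:Fin 3) from rfl,
      show (0:Fin 2).succ = (1:Fin 3) from rfl] at ht ⊢
    -- i = 0 : E 1 = E 0 + t*n, and t*n = n
    have ha : (E 1).1 = (E 0).1 + t * n := by rw [show (E 1) = _ from ht]; rfl
    have hb : (E 1).2 = (E 0).2 + t * n := by rw [show (E 1) = _ from ht]; rfl
    have htn : t * n = n := mul_eq_of_pos_lt t n (by omega) (by omega) (by omega)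
    -- S = {E 0, E 2 - n, E 2}
    refine ⟨{E 0, shift (E 2) (-1 * n), E 2}, ?_, ⟨?_, ?_⟩, ?_⟩
    · intro f hf
      simp only [Finset.coe_insert, Finset.coe_singleton, Set.mem_insert_iff,
        Set.mem_singleton_iff] at hf
      rcases hf with rfl | rfl | rfl
      · exact ⟨0, 0, hE0⟩
      · exact ⟨2, -1, rfl⟩
      · exact ⟨2, 0, hE2⟩
    · rw [Finset.card_eq_three]
      refine ⟨_, _, _, ?_, ?_, ?_, rfl⟩
      · intro h
        have := congrArg Prod.fst h
        simp only [shift] at this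
        omega
      · intro h
        have := congrArg Prod.fst h
        omega
      · intro h
        have := congrArg Prod.fst h
        simp only [shift] at this
        omega
    · intro e he f hf hef
      simp only [Finset.mem_insert, Finset.mem_singleton] at he hf
      rcases he with rfl | rfl | rfl <;> rcases hf with rfl | rfl | rfl <;>
        first
          | exact absurd rfl hef
          | (simp only [Crosses, shift]; omega)
    · refine ⟨E 0, ⟨by simp, 0, hE0⟩, ?_⟩
      rintro f ⟨hfS, s, rfl⟩
      simp only [Finset.mem_insert, Finset.mem_singleton] at hfS
      rcases hfS with h | h | h
      · exact h
      · exfalso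
        have h1 := congrArg Prod.fst h
        have h2 := congrArg Prod.snd h
        simp only [shift] at h1 h2
        have hsn : s * n = n := mul_eq_of_pos_lt s n (by omega) (by omega) (by omega)
        omega
      · exfalso
        have h1 := congrArg Prod.fst h
        have h2 := congrArg Prod.snd h
        simp only [shift] at h1 h2
        have hsn : s * n = n := mul_eq_of_pos_lt s n (by omega) (by omega) (by omega)
        omega
  · simp only [Fin.mk_one, show (1:Fin 2).castSucc = (1:Fin 3) from rfl,
      show (1:Fin 2).succ = (2:Fin 3) from rfl] at ht ⊢
    -- i = 1 : E 2 = E 1 + t*n, and t*n = n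
    have ha : (E 2).1 = (E 1).1 + t * n := by rw [show (E 2) = _ from ht]; rfl
    have hb : (E 2).2 = (E 1).2 + t * n := by rw [show (E 2) = _ from ht]; rfl
    have htn : t * n = n := mul_eq_of_pos_lt t n (by omega) (by omega) (by omega)
    refine ⟨{E 0, shift (E 0) (1 * n), E 2}, ?_, ⟨?_, ?_⟩, ?_⟩
    · intro f hf
      simp only [Finset.coe_insert, Finset.coe_singleton, Set.mem_insert_iff,
        Set.mem_singleton_iff] at hf
      rcases hf with rfl | rfl | rfl
      · exact ⟨0, 0, hE0⟩
      · exact ⟨0, 1, rfl⟩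
      · exact ⟨2, 0, hE2⟩
    · rw [Finset.card_eq_three]
      refine ⟨_, _, _, ?_, ?_, ?_, rfl⟩
      · intro h
        have := congrArg Prod.fst h
        simp only [shift] at this
        omega
      · intro h
        have := congrArg Prod.fst h
        omega
      · intro h
        have := congrArg Prod.fst h
        simp only [shift] at this
        omega
    · intro e he f hf hef
      simp only [Finset.mem_insert, Finset.mem_singleton] at he hf
      rcases he with rfl | rfl | rfl <;> rcases hf with rfl | rfl | rfl <;>
        first
          | exact absurd rfl hef
          | (simp only [Crosses, shift]; omega)
    · refine ⟨E 2, ⟨by simp, 1, ?_⟩, ?_⟩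
      · rw [show (E 2) = _ from ht]
        simp only [shift, htn, one_mul]
      · rintro f ⟨hfS, s, rfl⟩
        simp only [Finset.mem_insert, Finset.mem_singleton] at hfS
        rcases hfS with h | h | h
        · exfalso
          have h1 := congrArg Prod.fst h
          have h2 := congrArg Prod.snd h
          simp only [shift] at h1 h2
          have hsn : s * n ≤ -n := mul_le_neg_of_neg s n (by omega) (by omega)
          omega
        · exfalso
          have h1 := congrArg Prod.fst h
          have h2 := congrArg Prod.snd h
          simp only [shift] at h1 h2
          -- s*n < n; split on sign
          rcases lt_trichotomy (s * (n:ℤ)) 0 with hs | hs | hs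
          · have hsn : s * n ≤ -n := mul_le_neg_of_neg s n (by omega) hs
            omega
          · omega
          · have hsn : s * n = n := mul_eq_of_pos_lt s n (by omega) hs (by omega)
            omega
        · exact h



end Multitriangulation
end

section
/- Let n ≥ 1, let T be an n-periodic 2-triangulation on ℤ, and let ∠(u,v,w) be a 2-relevant angle of T (i.e., [u,v] or [v,w] is 2-relevant with length < 2n). Then there exists a 2-boundary edge (an edge of length exactly 2) intersecting ∠(u,v,w), i.e., crossing both [u,v] and [v,w]. -/
/- Edges on the universal cover of the half-cylinder, modeled by the integers.
   An edge is an unordered pair of distinct integers, represented as an ordered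
   pair `(a, b)` with `a < b` (validity). -/

namespace Multitriangulation

/-- The cyclic order relation on integers: `cyc a b c` iff
`a<b<c` or `b<c<a` or `c<a<b`. -/
def cyc (a b c : ℤ) : Prop := (a < b ∧ b < c) ∨ (b < c ∧ c < a) ∨ (c < a ∧ a < b)

/-- Membership of the unordered edge `[a,b]` in an edge set. -/
def EdgeMem (T : Set Edge) (a b : ℤ) : Prop := (a, b) ∈ T ∨ (b, a) ∈ T

/-- `∠(u,v,w)` is an angle of `T`: the edges `[u,v],[v,w]` lie in `T`,
`cyc u v w`, and `T` has no edge `[v,w₀]` with `w₀ ≺ u ≺ v ≺ w` in cyclic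
order. -/
def IsAngle (T : Set Edge) (u v w : ℤ) : Prop :=
  EdgeMem T u v ∧ EdgeMem T v w ∧ cyc u v w ∧
  ¬ ∃ w₀ : ℤ, EdgeMem T v w₀ ∧ cyc w₀ u v ∧ cyc w₀ v w

/-- Any maximal 3-crossing-free periodic set contains every edge of length 2. -/
lemma len2_mem (n : ℕ) (T : Set Edge) (hT : IsTriangulation n 2 T) (a : ℤ) :
    (a, a + 2) ∈ T := by
  obtain ⟨hval, hper, hcf, hmax⟩ := hT
  set T' : Set Edge := T ∪ {e : Edge | e.2 = e.1 + 2} with hT'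
  have hsub : T ⊆ T' := Set.subset_union_left
  have hval' : ValidEdges T' := by
    intro e he
    rcases he with he | he
    · exact hval e he
    · simp only [Set.mem_setOf_eq] at he; omega
  have hper' : Periodic n T' := by
    intro e
    constructor
    · rintro (he | he)
      · exact Or.inl ((hper e).mp he)
      · simp only [Set.mem_setOf_eq] at he
        right; simp only [Set.mem_setOf_eq, shift]; omega
    · rintro (he | he)
      · exact Or.inl ((hper e).mpr he)
      · simp only [Set.mem_setOf_eq, shift] at he
        right; simp only [Set.mem_setOf_eq]; omega
  have hcf' : CrossingFree 3 T' := by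
    rintro ⟨S, hSsub, hcard, hpc⟩
    by_cases hall : ∀ e ∈ S, e ∈ T
    · exact hcf ⟨S, fun e he => hall e he, hcard, hpc⟩
    · push_neg at hall
      obtain ⟨e, heS, heT⟩ := hall
      have he2 : e.2 = e.1 + 2 := by
        rcases hSsub heS with h | h
        · exact absurd h heT
        · exact h
      have hcard' : 1 < (S.erase e).card := by
        rw [Finset.card_erase_of_mem heS, hcard]; omega
      obtain ⟨f, hf, g, hg, hfg⟩ := Finset.one_lt_card.mp hcard'
      have hfS : f ∈ S := Finset.mem_of_mem_erase hf
      have hgS : g ∈ S := Finset.mem_of_mem_erase hg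
      have hfe : f ≠ e := Finset.ne_of_mem_erase hf
      have hge : g ≠ e := Finset.ne_of_mem_erase hg
      have h1 : Crosses e f := hpc e heS f hfS (Ne.symm hfe)
      have h2 : Crosses e g := hpc e heS g hgS (Ne.symm hge)
      have h3 : Crosses f g := hpc f hfS g hgS hfg
      simp only [Crosses] at h1 h2 h3
      omega
  have := hmax T' hval' hper' hcf' hsub
  have hmem : (a, a + 2) ∈ T' := Or.inr rfl
  rwa [this] at hmem

/-- If `∠(u,v,w)` is a 2-relevant angle of an `n`-periodic
2-triangulation `T` (i.e. `[u,v]` or `[v,w]` is 2-relevant with length `< 2n`),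
then there exists a 2-boundary edge (an edge `[c, c+2]` of length exactly 2)
intersecting `∠(u,v,w)`, i.e. crossing both `[u,v]` and `[v,w]`. -/
theorem boundary_edge_intersecting_relevant_angle (n : ℕ) (hn : 1 ≤ n)
    (T : Set Edge) (hT : IsTriangulation n 2 T) (u v w : ℤ)
    (hang : IsAngle T u v w)
    (hrel : (2 < |v - u| ∧ |v - u| < 2 * (n : ℤ)) ∨
            (2 < |w - v| ∧ |w - v| < 2 * (n : ℤ))) :
    ∃ c : ℤ, Crosses (c, c + 2) (u, v) ∧ Crosses (c, c + 2) (v, w) := by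
  obtain ⟨hm1, hm2, hcyc, hno⟩ := hang
  have hml : EdgeMem T v (v - 2) := by
    have h := len2_mem n T hT (v - 2)
    rw [show v - 2 + 2 = v by ring] at h
    exact Or.inr h
  have hmr : EdgeMem T v (v + 2) := Or.inl (len2_mem n T hT v)
  have F1 : ¬ (cyc (v - 2) u v ∧ cyc (v - 2) v w) := fun ⟨h1, h2⟩ =>
    hno ⟨v - 2, hml, h1, h2⟩
  have F2 : ¬ (cyc (v + 2) u v ∧ cyc (v + 2) v w) := fun ⟨h1, h2⟩ =>
    hno ⟨v + 2, hmr, h1, h2⟩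
  simp only [lt_abs, abs_lt] at hrel
  simp only [cyc] at hcyc F1 F2
  refine ⟨v - 1, ?_, ?_⟩ <;> simp only [Crosses] <;> omega

end Multitriangulation
end
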